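/- arXiv:1803.08404 — 3 statements merged into one kernel-verified Lean document; each statement's English description precedes it below -/
import Mathlib

section
/- Let a be an integer, let n ≥ 1 be an integer, and write d = gcd(a, n). Then the autocorrelation demerit factor of the Chu sequence Z_n^{(a)} satisfies ADF(Z_n^{(a)}) = (4d/n²) · Σ_{1 ≤ u ≤ n/(2d)} (sin(π a u²/n)/sin(π a u/n))² + (d−1)(2d−1)/(3d) − 2d·ε_{n/d}/n², where ε_{n/d} = 1 if n/d ≡ 2 (mod 4) and ε_{n/d} = 0 otherwise, and the sum runs over integers u with 1 ≤ u ≤ n/(2d). -/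
open Complex Real Filter Topology

noncomputable section

/-- Zero-extension of a (length `n`) sequence to all of `ℤ`: entries outside
`{0, ..., n-1}` are set to `0`. -/
def seqExt (n : ℕ) (A : ℤ → ℂ) : ℤ → ℂ := fun j => if 0 ≤ j ∧ j < (n : ℤ) then A j else 0

/-- Aperiodic crosscorrelation of two sequences of length `n` at shift `u`:
`C_{A,B}(u) = ∑_{j ∈ ℤ} a_j * conj (b_{j+u})`.  Since the zero-extended entries
vanish outside `{0, ..., n-1}`, the sum over `ℤ` equals the sum over that range. -/
def corr (n : ℕ) (A B : ℤ → ℂ) (u : ℤ) : ℂ :=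
  ∑ j ∈ Finset.Icc (0 : ℤ) ((n : ℤ) - 1), seqExt n A j * (starRingEnd ℂ) (seqExt n B (j + u))

/-- Crosscorrelation demerit factor `CDF(A,B)`.  The correlations vanish for
`|u| ≥ n`, so the sum over all `u ∈ ℤ` equals the sum over `-(n-1) ≤ u ≤ n-1`. -/
def cdf (n : ℕ) (A B : ℤ → ℂ) : ℝ :=
  (∑ u ∈ Finset.Icc (-(n : ℤ) + 1) ((n : ℤ) - 1), ‖corr n A B u‖ ^ 2) /
    (‖corr n A A 0‖ * ‖corr n B B 0‖)

/-- Autocorrelation demerit factor `ADF(A)`. -/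
def adf (n : ℕ) (A : ℤ → ℂ) : ℝ :=
  (∑ u ∈ Finset.Icc (-(n : ℤ) + 1) ((n : ℤ) - 1) \ {0}, ‖corr n A A u‖ ^ 2) /
    ‖corr n A A 0‖ ^ 2

/-- Pursley-Sarwate criterion `PSC(A,B)`. -/
def psc (n : ℕ) (A B : ℤ → ℂ) : ℝ := Real.sqrt (adf n A * adf n B) + cdf n A B

/-- The Chu sequence of length `n` with parameter `a`: `z_j = exp(π i a j² / n)`. -/
def chu (n : ℕ) (a : ℤ) : ℤ → ℂ :=
  fun j => Complex.exp (Real.pi * Complex.I * (a : ℂ) * (j : ℂ) ^ 2 / (n : ℂ))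

/-- Generalised Gauss sum `S_N(x, θ) = ∑_{j=1}^N exp(π i x j² + 2 π i θ j)`. -/
def gSum (N : ℕ) (x θ : ℝ) : ℂ :=
  ∑ j ∈ Finset.Icc 1 N,
    Complex.exp (Real.pi * Complex.I * (x : ℂ) * (j : ℂ) ^ 2 +
      2 * Real.pi * Complex.I * (θ : ℂ) * (j : ℂ))

/-!
For `0 ≤ u ≤ n` the correlation `C(u)` of the Chu sequence is a unimodular factor times the
geometric sum `∑_{j < n - u} ζ ^ j` with `ζ = exp (-2πi a u / n)`. Hence `|C(u)|² = (n - u)²`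
when `n ∣ a u`, i.e. when `m = n / d` divides `u`, and
`|C(u)|² = sin²(π a u² / n) / sin²(π a u / n)` otherwise. The latter is `m`-periodic and
invariant under `u ↦ m - u`, so writing `u = q m + r` the sum over `0 ≤ u < n` is a sum of
squares over the multiples of `m` plus `d` copies of one period, and one period folds onto
`1 ≤ r ≤ m / 2`, the middle term `r = m / 2` contributing `ε`. Negative shifts contribute as
much as positive ones because `C(-u) = conj (C(u))`.
-/

open Finset ComplexConjugate

lemma Int.natCast_dvd_mul_natCast_iff (a : ℤ) {n : ℕ} (hn : n ≠ 0) (u : ℕ) :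
    (n : ℤ) ∣ a * u ↔ n / a.gcd n ∣ u := by
  have hg : 0 < a.gcd n := Int.gcd_pos_of_ne_zero_right a (by exact_mod_cast hn)
  obtain ⟨a', n', hco, ha, hn'⟩ := Int.exists_gcd_one hg
  generalize a.gcd n = g at hg ha hn' ⊢
  have hg' : (g : ℤ) ≠ 0 := by exact_mod_cast hg.ne'
  rw [← Int.natCast_dvd_natCast, Int.natCast_div, hn', Int.mul_ediv_cancel _ hg', ha,
    mul_right_comm, mul_dvd_mul_iff_right hg']
  exact ⟨fun h => Int.dvd_of_dvd_mul_right_of_gcd_one h (by rwa [Int.gcd_comm]),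
    fun h => h.mul_left a'⟩

lemma Int.sum_Icc_sdiff_zero_of_even {M : Type*} [AddCommMonoid M] {g : ℤ → M}
    (hg : ∀ u, g (-u) = g u) (n : ℕ) :
    ∑ u ∈ Icc (-(n : ℤ) + 1) (n - 1) \ {0}, g u = 2 • ∑ u ∈ Ico 1 n, g u := by
  have hsplit : Icc (-(n : ℤ) + 1) (n - 1) \ {0} =
      (Ico 1 n).image (fun k : ℕ => (k : ℤ)) ∪ (Ico 1 n).image (fun k : ℕ => -(k : ℤ)) := by
    ext x
    simp only [Finset.mem_sdiff, mem_Icc, mem_singleton, mem_union, mem_image, mem_Ico]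
    constructor
    · rintro ⟨⟨h₁, h₂⟩, h₀⟩
      rcases lt_or_gt_of_ne h₀ with hx | hx
      · exact .inr ⟨(-x).toNat, by omega, by omega⟩
      · exact .inl ⟨x.toNat, by omega, by omega⟩
    · rintro (⟨k, hk, rfl⟩ | ⟨k, hk, rfl⟩) <;> omega
  have hdisj : Disjoint ((Ico 1 n).image (fun k : ℕ => (k : ℤ)))
      ((Ico 1 n).image (fun k : ℕ => -(k : ℤ))) := by
    simp only [disjoint_left, mem_image, mem_Ico]
    rintro _ ⟨k, hk, rfl⟩ ⟨l, hl, h⟩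
    omega
  rw [hsplit, sum_union hdisj, sum_image (by simp), sum_image (by simp), two_nsmul]
  simp only [hg]

lemma Finset.sum_range_mul_eq_sum_sum {M : Type*} [AddCommMonoid M] (f : ℕ → M) (d m : ℕ) :
    ∑ u ∈ range (d * m), f u = ∑ q ∈ range d, ∑ r ∈ range m, f (q * m + r) := by
  induction d with
  | zero => simp
  | succ d ih => rw [add_mul, one_mul, sum_range_add, ih, sum_range_succ]

lemma Finset.sum_range_add_ite_even {M : Type*} [AddCommMonoid M] {f : ℕ → M} {m : ℕ}
    (h₀ : f 0 = 0) (hsymm : ∀ r ≤ m, f (m - r) = f r) :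
    ∑ r ∈ range m, f r + (if Even m then f (m / 2) else 0) = 2 • ∑ r ∈ Icc 1 (m / 2), f r := by
  have hlow : ∑ r ∈ range (m / 2 + 1), f r = ∑ r ∈ Icc 1 (m / 2), f r := by
    rw [range_eq_Ico, sum_eq_sum_Ico_succ_bot (Nat.succ_pos _), h₀, zero_add, Nat.succ_eq_add_one,
      Ico_add_one_right_eq_Icc]
  have hhigh : ∑ k ∈ range (m - m / 2), f (m / 2 + 1 + k) = ∑ k ∈ range (m - m / 2), f k := by
    rw [← sum_range_reflect f]
    refine sum_congr rfl fun k hk => ?_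
    rw [mem_range] at hk
    rw [← hsymm _ (by omega)]
    congr 1
    omega
  have hsplit :
      ∑ r ∈ range m, f r = ∑ r ∈ range (m / 2 + 1), f r + ∑ k ∈ range (m - m / 2), f k := by
    rw [← hhigh, ← sum_range_add, show m / 2 + 1 + (m - m / 2) = m + 1 by omega, sum_range_succ,
      ← Nat.sub_zero m, hsymm 0 (Nat.zero_le _), h₀, add_zero, Nat.sub_zero]
  rw [hsplit, hlow, two_nsmul]
  rcases Nat.even_or_odd' m with ⟨h, rfl | rfl⟩
  · rw [if_pos (even_two_mul h), show 2 * h - 2 * h / 2 = 2 * h / 2 by omega, add_assoc,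
      ← sum_range_succ, hlow]
  · rw [if_neg (Nat.not_even_iff_odd.mpr (odd_two_mul_add_one h)),
      show 2 * h + 1 - (2 * h + 1) / 2 = (2 * h + 1) / 2 + 1 by omega, hlow, add_zero]

lemma sum_range_natCast_sub_sq (d : ℕ) :
    ∑ q ∈ range d, ((d : ℝ) - q) ^ 2 = d * (d + 1) * (2 * d + 1) / 6 := by
  induction d with
  | zero => simp
  | succ d ih =>
    rw [sum_range_succ']
    simp only [Nat.cast_succ, add_sub_add_right_eq_sub, ih]
    ring

lemma Real.sin_sq_add_int_mul_pi (x : ℝ) (k : ℤ) :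
    Real.sin (x + k * π) ^ 2 = Real.sin x ^ 2 := by
  rw [Real.sin_add_int_mul_pi, mul_pow, ← sq_abs ((-1 : ℝ) ^ k), abs_neg_one_zpow, one_pow,
    one_mul]

lemma Real.sin_sq_pi_mul_div_two (j : ℤ) :
    Real.sin (π * j / 2) ^ 2 = if Even j then 0 else 1 := by
  rcases Int.even_or_odd' j with ⟨i, rfl | rfl⟩
  · rw [if_pos (even_two_mul i), show π * ((2 * i : ℤ) : ℝ) / 2 = i * π by push_cast; ring,
      Real.sin_int_mul_pi, zero_pow two_ne_zero]
  · rw [if_neg (Int.not_even_iff_odd.mpr (odd_two_mul_add_one i)),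
      show π * ((2 * i + 1 : ℤ) : ℝ) / 2 = π / 2 + i * π by push_cast; ring,
      Real.sin_sq_add_int_mul_pi, Real.sin_pi_div_two, one_pow]

lemma Real.sin_pi_mul_div_natCast_eq_zero_iff {n : ℕ} (hn : n ≠ 0) (k : ℤ) :
    Real.sin (π * k / n) = 0 ↔ (n : ℤ) ∣ k := by
  rw [Real.sin_eq_zero_iff]
  constructor
  · rintro ⟨j, hj⟩
    refine ⟨j, ?_⟩
    field_simp at hj
    rw [← Int.cast_inj (α := ℝ)]
    push_cast
    linarith
  · rintro ⟨j, rfl⟩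
    exact ⟨j, by push_cast; field_simp⟩

lemma norm_geom_sum_exp_mul_I_sq {θ : ℝ} (hθ : Real.sin (θ / 2) ≠ 0) (N : ℕ) :
    ‖∑ j ∈ range N, exp (θ * I) ^ j‖ ^ 2 = Real.sin (N * θ / 2) ^ 2 / Real.sin (θ / 2) ^ 2 := by
  have hnorm (x : ℝ) : ‖exp (x * I) - 1‖ = 2 * |Real.sin (x / 2)| := by
    rw [mul_comm, Complex.norm_exp_I_mul_ofReal_sub_one, norm_mul, Real.norm_eq_abs]; norm_num
  have hζ : exp (θ * I) ≠ 1 := fun h => hθ (by simpa [h] using hnorm θ)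
  rw [geom_sum_eq hζ, ← Complex.exp_nat_mul, ← mul_assoc, ← ofReal_natCast, ← ofReal_mul,
    norm_div, hnorm, hnorm, div_pow, mul_pow, mul_pow, sq_abs, sq_abs, mul_div_assoc]
  field_simp

lemma seqExt_eq_zero {n : ℕ} {A : ℤ → ℂ} {j : ℤ} (hj : ¬(0 ≤ j ∧ j < n)) :
    seqExt n A j = 0 := if_neg hj

lemma corr_eq_finsum (n : ℕ) (A B : ℤ → ℂ) (u : ℤ) :
    corr n A B u = ∑ᶠ j, seqExt n A j * conj (seqExt n B (j + u)) := by
  refine (finsum_eq_sum_of_support_subset _ fun j hj => ?_).symm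
  by_contra hj'
  simp only [coe_Icc, Set.mem_Icc, not_and_or, not_le] at hj'
  exact hj (by simp [seqExt_eq_zero (show ¬(0 ≤ j ∧ j < n) by omega)])

lemma corr_neg (n : ℕ) (A B : ℤ → ℂ) (u : ℤ) : corr n A B (-u) = conj (corr n B A u) := by
  rw [corr_eq_finsum, ← finsum_comp_equiv (M := ℂ) (Equiv.addRight u), corr, map_sum,
    finsum_eq_sum_of_support_subset (s := Icc (0 : ℤ) (n - 1))]
  · simp [mul_comm]
  · intro j hj
    by_contra hj'
    simp only [coe_Icc, Set.mem_Icc, not_and_or, not_le] at hj'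
    exact hj (by simp [seqExt_eq_zero (show ¬(0 ≤ j ∧ j < n) by omega)])

lemma corr_natCast (n : ℕ) (A B : ℤ → ℂ) {u : ℕ} (hu : u ≤ n) :
    corr n A B u = ∑ j ∈ range (n - u), A j * conj (B (j + u)) := by
  rw [corr_eq_finsum,
    finsum_eq_sum_of_support_subset (s := (range (n - u)).map Nat.castEmbedding), sum_map]
  · refine sum_congr rfl fun j hj => ?_
    rw [mem_range] at hj
    simp only [Nat.castEmbedding_apply, seqExt]
    rw [if_pos (by omega), if_pos (by omega)]
  · intro j hj
    by_contra hj'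
    simp only [coe_map, Nat.castEmbedding_apply, coe_range, Set.mem_image, Set.mem_Iio,
      not_exists, not_and] at hj'
    refine hj ?_
    by_cases h0 : 0 ≤ j
    · lift j to ℕ using h0
      have : ¬ ((j : ℤ) + u < n) := by have := hj' j; omega
      simp [seqExt_eq_zero (n := n) (A := B) (j := (j : ℤ) + u) (by omega)]
    · simp [seqExt_eq_zero (n := n) (A := A) (j := j) (by omega)]

lemma adf_eq (n : ℕ) (A : ℤ → ℂ) :
    adf n A = 2 * (∑ u ∈ Ico 1 n, ‖corr n A A u‖ ^ 2) / ‖corr n A A 0‖ ^ 2 := by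
  rw [adf, Int.sum_Icc_sdiff_zero_of_even (fun u => by rw [corr_neg, Complex.norm_conj]),
    nsmul_eq_mul, Nat.cast_ofNat]

lemma corr_chu_natCast (a : ℤ) {n u : ℕ} (hu : u ≤ n) :
    corr n (chu n a) (chu n a) u =
      exp ((-(π * a * u ^ 2 / n) : ℝ) * I) *
        ∑ j ∈ range (n - u), exp ((-(2 * π * a * u / n) : ℝ) * I) ^ j := by
  rw [corr_natCast _ _ _ hu, mul_sum]
  refine sum_congr rfl fun j _ => ?_
  simp only [chu, ← Complex.exp_conj, ← Complex.exp_nat_mul, ← Complex.exp_add, map_div₀,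
    map_mul, map_pow, Complex.conj_I, Complex.conj_ofReal, map_intCast, map_natCast]
  congr 1
  push_cast
  ring

/-- `‖C(u)‖²` for the Chu sequence when `n ∤ a u`; where `n ∣ a u` the denominator vanishes and,
since `x / 0 = 0`, so does `chuTerm`. -/
def chuTerm (a : ℤ) (n : ℕ) (u : ℤ) : ℝ :=
  (Real.sin (π * a * u ^ 2 / n) / Real.sin (π * a * u / n)) ^ 2

lemma sin_pi_mul_mul_div_eq_zero_iff (a : ℤ) {n : ℕ} (hn : n ≠ 0) (u : ℤ) :
    Real.sin (π * a * u / n) = 0 ↔ (n : ℤ) ∣ a * u := by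
  rw [← Real.sin_pi_mul_div_natCast_eq_zero_iff hn, Int.cast_mul, mul_assoc]

lemma norm_sq_corr_chu (a : ℤ) {n u : ℕ} (hn : n ≠ 0) (hu : u ≤ n) :
    ‖corr n (chu n a) (chu n a) u‖ ^ 2 =
      chuTerm a n u + if (n : ℤ) ∣ a * u then ((n : ℝ) - u) ^ 2 else 0 := by
  rw [corr_chu_natCast a hu, norm_mul, Complex.norm_exp_ofReal_mul_I, one_mul]
  split_ifs with h
  · obtain ⟨k, hk⟩ := h
    have hk' : (a : ℂ) * u = n * k := by exact_mod_cast hk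
    have hζ : exp ((-(2 * π * a * u / n) : ℝ) * I) = 1 := by
      rw [← Complex.exp_int_mul_two_pi_mul_I (-k)]
      congr 1
      push_cast
      field_simp
      linear_combination -hk'
    have hterm : chuTerm a n u = 0 := by
      rw [chuTerm, (sin_pi_mul_mul_div_eq_zero_iff a hn u).mpr (mod_cast ⟨k, hk⟩), div_zero,
        zero_pow two_ne_zero]
    rw [hζ, hterm, zero_add]
    simp only [one_pow, sum_const, card_range, nsmul_eq_mul, mul_one]
    rw [Complex.norm_natCast, Nat.cast_sub hu]
  · have hhalf : -(2 * π * a * u / n) / 2 = -(π * a * (u : ℤ) / n) := by push_cast; ring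
    have hθ : Real.sin (-(2 * π * a * u / n) / 2) ≠ 0 := by
      rw [hhalf, Real.sin_neg, neg_ne_zero, Ne, sin_pi_mul_mul_div_eq_zero_iff a hn]
      exact_mod_cast h
    rw [norm_geom_sum_exp_mul_I_sq hθ, hhalf, chuTerm, div_pow, add_zero]
    have hN : ((n - u : ℕ) : ℝ) * -(2 * π * a * u / n) / 2 =
        π * a * u ^ 2 / n + (-(a * u) : ℤ) * π := by
      push_cast [Nat.cast_sub hu]
      field_simp
      ring
    rw [hN, Real.sin_sq_add_int_mul_pi, Real.sin_neg, neg_sq, Int.cast_natCast]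

lemma chuTerm_even (a : ℤ) (n : ℕ) : Function.Even (chuTerm a n) := fun u => by
  simp only [chuTerm, Int.cast_neg, neg_sq, mul_neg, neg_div, Real.sin_neg, div_neg]

lemma chuTerm_periodic (a : ℤ) {n m : ℕ} (h : (n : ℤ) ∣ a * m) :
    Function.Periodic (chuTerm a n) m := fun u => by
  rcases eq_or_ne n 0 with rfl | hn
  · simp [chuTerm]
  obtain ⟨k, hk⟩ := h
  have hk' : (a : ℝ) * m = n * k := by exact_mod_cast hk
  have h₁ : π * a * ((u + m : ℤ) : ℝ) / n = π * a * u / n + k * π := by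
    push_cast
    field_simp
    linear_combination hk'
  have h₂ :
      π * a * ((u + m : ℤ) : ℝ) ^ 2 / n = π * a * u ^ 2 / n + (k * (2 * u + m) : ℤ) * π := by
    push_cast
    field_simp
    linear_combination (2 * u + m) * hk'
  rw [chuTerm, chuTerm, div_pow, div_pow, h₁, h₂, Real.sin_sq_add_int_mul_pi,
    Real.sin_sq_add_int_mul_pi]

lemma chuTerm_half (a : ℤ) {n m : ℕ} (hn : n ≠ 0) (hper : ∀ u : ℕ, (n : ℤ) ∣ a * u ↔ m ∣ u)
    (hm : Even m) : chuTerm a n (m / 2 : ℕ) = if m % 4 = 2 then 1 else 0 := by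
  obtain ⟨h, rfl⟩ := hm
  rw [show (h + h) / 2 = h by omega]
  obtain ⟨k, hk⟩ := (hper (h + h)).mpr dvd_rfl
  rcases Nat.eq_zero_or_pos h with rfl | hpos
  · simp [chuTerm]
  have hk_odd : ¬Even k := by
    rintro ⟨k', rfl⟩
    have hdvd : h + h ∣ h := (hper h).mp ⟨k', by push_cast at hk; linarith⟩
    have := Nat.le_of_dvd hpos hdvd
    omega
  have hk' : (a : ℝ) * (h + h) = n * k := by exact_mod_cast hk
  have h₁ : π * a * ((h : ℤ) : ℝ) / n = π * k / 2 := by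
    push_cast
    field_simp
    linear_combination hk'
  have h₂ : π * a * ((h : ℤ) : ℝ) ^ 2 / n = π * (k * h : ℤ) / 2 := by
    push_cast
    field_simp
    linear_combination hk'
  rw [chuTerm, div_pow, h₁, h₂, Real.sin_sq_pi_mul_div_two, Real.sin_sq_pi_mul_div_two,
    if_neg hk_odd, div_one]
  simp only [Int.even_mul, hk_odd, false_or, Int.even_coe_nat, Nat.even_iff]
  split_ifs <;> first | rfl | (exfalso; omega)

lemma sum_norm_sq_corr_chu (a : ℤ) {n d m : ℕ} (hn : n ≠ 0) (hnm : n = d * m)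
    (hper : ∀ u : ℕ, (n : ℤ) ∣ a * u ↔ m ∣ u) :
    ∑ u ∈ range n, ‖corr n (chu n a) (chu n a) u‖ ^ 2 =
      d * ∑ r ∈ range m, chuTerm a n r + m ^ 2 * (d * (d + 1) * (2 * d + 1) / 6) := by
  rw [sum_congr rfl fun u hu => norm_sq_corr_chu a hn (mem_range.mp hu).le, sum_add_distrib]
  rw [show range n = range (d * m) by rw [hnm], sum_range_mul_eq_sum_sum,
    sum_range_mul_eq_sum_sum]
  congr 1
  · have hperiodic := chuTerm_periodic a ((hper m).mpr dvd_rfl)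
    simp only [Nat.cast_add, Nat.cast_mul, add_comm _ ((_ : ℕ) : ℤ), hperiodic.nat_mul _ _,
      sum_const, card_range, nsmul_eq_mul]
  · rw [← sum_range_natCast_sub_sq, mul_sum]
    refine sum_congr rfl fun q _ => ?_
    rw [sum_eq_single_of_mem 0 (mem_range.mpr (Nat.pos_of_ne_zero ?_)) fun r hr hr₀ => if_neg ?_,
      add_zero, if_pos ((hper _).mpr (dvd_mul_left m q))]
    · push_cast [hnm]
      ring
    · rintro rfl
      omega
    · rw [hper, Nat.dvd_add_right (dvd_mul_left m q)]
      exact fun hdvd => hr₀ (Nat.eq_zero_of_dvd_of_lt hdvd (mem_range.mp hr))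

lemma sum_range_chuTerm (a : ℤ) {n m : ℕ} (hn : n ≠ 0)
    (hper : ∀ u : ℕ, (n : ℤ) ∣ a * u ↔ m ∣ u) :
    ∑ r ∈ range m, chuTerm a n r =
      2 * ∑ r ∈ Icc 1 (m / 2), chuTerm a n r - if m % 4 = 2 then 1 else 0 := by
  have hfold := sum_range_add_ite_even (f := fun r : ℕ => chuTerm a n r) (m := m)
    (by simp [chuTerm]) fun r hr => by
      rw [Nat.cast_sub hr, sub_eq_neg_add, chuTerm_periodic a ((hper m).mpr dvd_rfl) _,
        chuTerm_even a n _]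
  have hmiddle :
      (if Even m then chuTerm a n (m / 2 : ℕ) else 0) = if m % 4 = 2 then 1 else 0 := by
    by_cases hm : Even m
    · rw [if_pos hm, chuTerm_half a hn hper hm]
    · rw [if_neg hm, if_neg fun hm4 => hm (Nat.even_iff.mpr (by omega))]
  rw [hmiddle, two_nsmul] at hfold
  linear_combination hfold

lemma norm_corr_chu_zero (a : ℤ) (n : ℕ) : ‖corr n (chu n a) (chu n a) 0‖ = n := by
  simpa using congrArg norm (corr_chu_natCast a (Nat.zero_le n))

lemma sum_Ico_norm_sq_corr_chu (a : ℤ) {n d m : ℕ} (hn : n ≠ 0) (hnm : n = d * m)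
    (hper : ∀ u : ℕ, (n : ℤ) ∣ a * u ↔ m ∣ u) :
    ∑ u ∈ Ico 1 n, ‖corr n (chu n a) (chu n a) u‖ ^ 2 =
      d * (2 * ∑ r ∈ Icc 1 (m / 2), chuTerm a n r - if m % 4 = 2 then 1 else 0) +
        m ^ 2 * (d * (d - 1) * (2 * d - 1) / 6) := by
  have hsum := sum_norm_sq_corr_chu a hn hnm hper
  rw [sum_range_eq_add_Ico _ (Nat.pos_of_ne_zero hn), Nat.cast_zero, norm_corr_chu_zero,
    sum_range_chuTerm a hn hper, show (n : ℝ) = d * m by exact_mod_cast hnm] at hsum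
  linear_combination hsum

/-- exact formula for the autocorrelation demerit factor of a Chu sequence. -/
theorem adf_chu_formula (a : ℤ) (n : ℕ) (hn : 1 ≤ n) (d : ℕ) (hd : d = Int.gcd a n) :
    adf n (chu n a) =
      4 * d / (n : ℝ) ^ 2 *
        ∑ u ∈ Finset.Icc 1 (n / (2 * d)),
          (Real.sin (Real.pi * a * u ^ 2 / n) / Real.sin (Real.pi * a * u / n)) ^ 2 +
      ((d : ℝ) - 1) * (2 * d - 1) / (3 * d) -
      2 * d * (if n / d % 4 = 2 then (1 : ℝ) else 0) / (n : ℝ) ^ 2 := by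
  have hn₀ : n ≠ 0 := by omega
  have hd₀ : d ≠ 0 := hd ▸ (Int.gcd_pos_of_ne_zero_right a (by exact_mod_cast hn₀)).ne'
  have hdn : d ∣ n := hd ▸ Int.natCast_dvd_natCast.mp (Int.gcd_dvd_right a n)
  set m := n / d
  have hnm : n = d * m := (Nat.mul_div_cancel' hdn).symm
  have hm₀ : m ≠ 0 := right_ne_zero_of_mul (hnm ▸ hn₀)
  have hper (u : ℕ) : (n : ℤ) ∣ a * u ↔ m ∣ u := by
    rw [Int.natCast_dvd_mul_natCast_iff a hn₀, ← hd]
  rw [adf_eq, sum_Ico_norm_sq_corr_chu a hn₀ hnm hper, norm_corr_chu_zero,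
    mul_comm 2 d, ← Nat.div_div_eq_div_mul]
  simp only [chuTerm, Int.cast_natCast]
  rw [show (n : ℝ) = d * m by exact_mod_cast hnm]
  field_simp
  ring
end
end

section
/- Let A and B be sequences of length n of complex numbers, each containing at least one nonzero entry. Then −sqrt(ADF(A)·ADF(B)) ≤ CDF(A,B) − 1 ≤ sqrt(ADF(A)·ADF(B)); equivalently, the Pursley–Sarwate criterion satisfies PSC(A,B) = sqrt(ADF(A)·ADF(B)) + CDF(A,B) ≥ 1. -/
open Complex Real Filter Topology

noncomputable section

/-!
Substituting `m = j + u`, both `∑ᵤ |C_{A,B}(u)|²` and `∑ᵤ C_{A,A}(u) · conj C_{B,B}(u)` become the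
same triple sum over `{0, …, n-1}³`. Splitting off `u = 0`, where `C_{A,A}(0) C_{B,B}(0)` is the
normalising denominator, gives `CDF(A,B) - 1 = Re (∑_{u ≠ 0} C_{A,A}(u) · conj C_{B,B}(u)) /
(C_{A,A}(0) C_{B,B}(0))`, and Cauchy–Schwarz bounds this by `√(ADF(A) ADF(B))`.
-/

open Finset ComplexConjugate

theorem seqExt_eq_zero_of_notMem {n : ℕ} {A : ℤ → ℂ} {j : ℤ}
    (h : j ∉ Icc (0 : ℤ) ((n : ℤ) - 1)) : seqExt n A j = 0 := by
  rw [mem_Icc] at h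
  simp only [seqExt, ite_eq_right_iff]
  omega

theorem mem_Icc_of_seqExt_ne_zero {n : ℕ} {A : ℤ → ℂ} {j : ℤ} (h : seqExt n A j ≠ 0) :
    j ∈ Icc (0 : ℤ) ((n : ℤ) - 1) :=
  not_not.mp (mt seqExt_eq_zero_of_notMem h)

theorem sum_Icc_add_eq_sum_Icc {M : Type*} [AddCommMonoid M] {n : ℕ} {j : ℤ}
    (hj : j ∈ Icc (0 : ℤ) ((n : ℤ) - 1)) {f : ℤ → M}
    (hf : ∀ m ∉ Icc (0 : ℤ) ((n : ℤ) - 1), f m = 0) :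
    ∑ u ∈ Icc (-(n : ℤ) + 1) ((n : ℤ) - 1), f (j + u) = ∑ m ∈ Icc (0 : ℤ) ((n : ℤ) - 1), f m := by
  have hshift : ∑ u ∈ Icc (-(n : ℤ) + 1) ((n : ℤ) - 1), f (j + u) =
      ∑ m ∈ Icc (j + (-(n : ℤ) + 1)) (j + ((n : ℤ) - 1)), f m := by
    rw [← map_add_left_Icc, sum_map]
    rfl
  rw [hshift]
  refine (sum_subset (fun m hm => ?_) fun m _ hm => hf m hm).symm
  rw [mem_Icc] at hj hm ⊢
  omega

theorem sum_corr_mul_conj_corr (n : ℕ) (A B C D : ℤ → ℂ) :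
    ∑ u ∈ Icc (-(n : ℤ) + 1) ((n : ℤ) - 1), corr n A B u * conj (corr n C D u) =
      ∑ j ∈ Icc (0 : ℤ) ((n : ℤ) - 1), ∑ k ∈ Icc (0 : ℤ) ((n : ℤ) - 1),
        ∑ m ∈ Icc (0 : ℤ) ((n : ℤ) - 1), seqExt n A j * conj (seqExt n C k) *
          (conj (seqExt n B m) * seqExt n D (m + k - j)) := by
  have expand : ∀ u, corr n A B u * conj (corr n C D u) =
      ∑ j ∈ Icc (0 : ℤ) ((n : ℤ) - 1), ∑ k ∈ Icc (0 : ℤ) ((n : ℤ) - 1),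
        seqExt n A j * conj (seqExt n C k) * (conj (seqExt n B (j + u)) * seqExt n D (k + u)) := by
    intro u
    simp only [corr, map_sum, map_mul, conj_conj, sum_mul_sum]
    exact sum_congr rfl fun j _ => sum_congr rfl fun k _ => by ring
  simp only [expand]
  rw [sum_comm]
  refine sum_congr rfl fun j hj => ?_
  rw [sum_comm]
  refine sum_congr rfl fun k _ => ?_
  rw [← sum_Icc_add_eq_sum_Icc hj fun m hm => by simp [seqExt_eq_zero_of_notMem hm]]
  exact sum_congr rfl fun u _ => by ring_nf

theorem sum_corr_mul_conj_corr_eq (n : ℕ) (A B : ℤ → ℂ) :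
    ∑ u ∈ Icc (-(n : ℤ) + 1) ((n : ℤ) - 1), corr n A B u * conj (corr n A B u) =
      ∑ u ∈ Icc (-(n : ℤ) + 1) ((n : ℤ) - 1), corr n A A u * conj (corr n B B u) := by
  rw [sum_corr_mul_conj_corr, sum_corr_mul_conj_corr]
  refine sum_congr rfl fun j _ => ?_
  rw [sum_comm]
  refine sum_congr rfl fun k _ => sum_congr rfl fun m _ => ?_
  rw [add_comm m k]
  ring

theorem corr_self_zero (n : ℕ) (A : ℤ → ℂ) :
    corr n A A 0 = ((∑ j ∈ Icc (0 : ℤ) ((n : ℤ) - 1), normSq (seqExt n A j) : ℝ) : ℂ) := by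
  rw [corr, ofReal_sum]
  exact sum_congr rfl fun j _ => by rw [add_zero, mul_conj]

theorem ofReal_norm_corr_self_zero (n : ℕ) (A : ℤ → ℂ) :
    (‖corr n A A 0‖ : ℂ) = corr n A A 0 := by
  rw [corr_self_zero, norm_real, Real.norm_of_nonneg (sum_nonneg fun _ _ => normSq_nonneg _)]

theorem norm_corr_self_zero_pos {n : ℕ} {A : ℤ → ℂ} (hA : ∃ j, seqExt n A j ≠ 0) :
    0 < ‖corr n A A 0‖ := by
  obtain ⟨j, hj⟩ := hA
  rw [norm_pos_iff, corr_self_zero, ofReal_ne_zero]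
  exact (sum_pos' (fun _ _ => normSq_nonneg _)
    ⟨j, mem_Icc_of_seqExt_ne_zero hj, normSq_pos.mpr hj⟩).ne'

theorem sum_norm_sq_corr_eq {n : ℕ} (hn : 0 < n) (A B : ℤ → ℂ) :
    ∑ u ∈ Icc (-(n : ℤ) + 1) ((n : ℤ) - 1), ‖corr n A B u‖ ^ 2 =
      ‖corr n A A 0‖ * ‖corr n B B 0‖ +
        (∑ u ∈ Icc (-(n : ℤ) + 1) ((n : ℤ) - 1) \ {0}, corr n A A u * conj (corr n B B u)).re := by
  have h0 : (0 : ℤ) ∈ Icc (-(n : ℤ) + 1) ((n : ℤ) - 1) := by rw [mem_Icc]; omega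
  have hsq : ∀ z : ℂ, ‖z‖ ^ 2 = (z * conj z).re := fun z => by
    rw [mul_conj, ofReal_re, normSq_eq_norm_sq]
  simp only [hsq, ← re_sum]
  rw [sum_corr_mul_conj_corr_eq, sum_eq_add_sum_sdiff_singleton_of_mem h0, add_re]
  congr 1
  conv_lhs => rw [← ofReal_norm_corr_self_zero n A, ← ofReal_norm_corr_self_zero n B]
  rw [conj_ofReal, ← ofReal_mul, ofReal_re]

theorem norm_sum_mul_conj_le {ι : Type*} (s : Finset ι) (f g : ι → ℂ) :
    ‖∑ i ∈ s, f i * conj (g i)‖ ≤ √(∑ i ∈ s, ‖f i‖ ^ 2) * √(∑ i ∈ s, ‖g i‖ ^ 2) := by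
  refine (norm_sum_le _ _).trans ?_
  simp only [norm_mul, norm_conj]
  exact Real.sum_mul_le_sqrt_mul_sqrt s _ _

theorem abs_cdf_sub_one_le {n : ℕ} {A B : ℤ → ℂ}
    (hA : ∃ j, seqExt n A j ≠ 0) (hB : ∃ j, seqExt n B j ≠ 0) :
    |cdf n A B - 1| ≤ √(adf n A * adf n B) := by
  have hn : 0 < n := by
    obtain ⟨j, hj⟩ := hA
    have := mem_Icc.mp (mem_Icc_of_seqExt_ne_zero hj)
    omega
  have hrA := norm_corr_self_zero_pos hA
  have hrB := norm_corr_self_zero_pos hB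
  set U := Icc (-(n : ℤ) + 1) ((n : ℤ) - 1) \ {0}
  set T := ∑ u ∈ U, corr n A A u * conj (corr n B B u)
  have hT : |T.re| ≤ √(∑ u ∈ U, ‖corr n A A u‖ ^ 2) * √(∑ u ∈ U, ‖corr n B B u‖ ^ 2) :=
    (abs_re_le_norm T).trans (norm_sum_mul_conj_le U _ _)
  calc |cdf n A B - 1| = |T.re| / (‖corr n A A 0‖ * ‖corr n B B 0‖) := by
        rw [cdf, sum_norm_sq_corr_eq hn, add_div, div_self (mul_pos hrA hrB).ne',
          add_sub_cancel_left, abs_div, abs_of_pos (mul_pos hrA hrB)]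
    _ ≤ √(∑ u ∈ U, ‖corr n A A u‖ ^ 2) * √(∑ u ∈ U, ‖corr n B B u‖ ^ 2) /
          (‖corr n A A 0‖ * ‖corr n B B 0‖) := by gcongr
    _ = √(adf n A * adf n B) := by
        rw [adf, adf, div_mul_div_comm, ← mul_pow, Real.sqrt_div' _ (sq_nonneg _),
          Real.sqrt_sq (mul_pos hrA hrB).le, Real.sqrt_mul (sum_nonneg fun _ _ => sq_nonneg _)]

/-- the Pursley-Sarwate inequalities:
-sqrt(ADF(A) ADF(B)) <= CDF(A,B) - 1 <= sqrt(ADF(A) ADF(B)), equivalently PSC(A,B) >= 1. -/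
theorem pursley_sarwate (n : ℕ) (A B : ℤ → ℂ)
    (hA : ∃ j : ℤ, seqExt n A j ≠ 0) (hB : ∃ j : ℤ, seqExt n B j ≠ 0) :
    -Real.sqrt (adf n A * adf n B) ≤ cdf n A B - 1 ∧
    cdf n A B - 1 ≤ Real.sqrt (adf n A * adf n B) ∧
    1 ≤ psc n A B := by
  obtain ⟨hlower, hupper⟩ := abs_le.mp (abs_cdf_sub_one_le hA hB)
  refine ⟨hlower, hupper, ?_⟩
  rw [psc]
  linarith
end
end

section
/- For each positive integer n let X_n = Z_{2n}^{(n+1)} and Y_n = Z_{2n}^{(n-1)} be the Chu sequences of length 2n with parameters n+1 and n−1. Then for every odd integer u with |u| ≤ 2n−1, the aperiodic crosscorrelation satisfies |C_{X_n, Y_n}(u)| = 1. -/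
open Complex Real Filter Topology

noncomputable section

/-!
Each term `x_j · conj y_{j+u}` of the correlation sum is `exp (π i g(j) / 2n)` with
`g(j) = (n+1) j² - (n-1)(j+u)²`. For odd `u` the reflection `j ↦ 2n - u - j` changes `g` by
`2n` times an odd integer, hence negates the term. This reflection pairs off all terms but the
first one, which is unimodular.
-/

open Finset

theorem corr_eq_sum_Icc (n : ℕ) (A B : ℤ → ℂ) (u : ℤ) :
    corr n A B u = ∑ j ∈ Icc (max 0 (-u)) ((n : ℤ) - 1 - max 0 u),
      A j * (starRingEnd ℂ) (B (j + u)) := by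
  unfold corr
  have hhi : (n : ℤ) - 1 - max 0 u ≤ n - 1 := by omega
  rw [← sum_subset (Icc_subset_Icc (le_max_left 0 (-u)) hhi)]
  · refine sum_congr rfl fun j hj => ?_
    rw [mem_Icc] at hj
    simp only [seqExt, if_pos (show 0 ≤ j ∧ j < (n : ℤ) by omega),
      if_pos (show 0 ≤ j + u ∧ j + u < (n : ℤ) by omega)]
  · intro j hj hj'
    rw [mem_Icc] at hj hj'
    simp [seqExt, if_neg (show ¬(0 ≤ j + u ∧ j + u < (n : ℤ)) by omega)]

theorem sum_Icc_eq_zero_of_reflect_eq_neg {M : Type*} [AddCommGroup M] {f : ℤ → M} {a b : ℤ}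
    (hab : Odd (a + b)) (hf : ∀ j, f (a + b - j) = -f j) : ∑ j ∈ Icc a b, f j = 0 := by
  refine sum_involution (fun j _ => a + b - j) (fun j _ => by rw [hf, add_neg_cancel])
    (fun j _ _ h => ?_) (fun j hj => by rw [mem_Icc] at hj ⊢; omega) (fun j _ => by ring)
  obtain ⟨k, hk⟩ := hab
  omega

theorem norm_chu (m : ℕ) (a j : ℤ) : ‖chu m a j‖ = 1 := by
  have : π * I * (a : ℂ) * (j : ℂ) ^ 2 / (m : ℂ) = ((π * a * j ^ 2 / m : ℝ) : ℂ) * I := by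
    push_cast
    ring
  rw [chu, this, norm_exp_ofReal_mul_I]

theorem chu_mul_conj_chu (m : ℕ) (a b j k : ℤ) :
    chu m a j * (starRingEnd ℂ) (chu m b k) =
      Complex.exp (π * I * ((a * j ^ 2 - b * k ^ 2 : ℤ) : ℂ) / m) := by
  rw [chu, chu, ← exp_conj, ← Complex.exp_add]
  congr 1
  simp only [map_div₀, map_mul, map_pow, conj_ofReal, conj_I, map_intCast, map_natCast]
  push_cast
  ring

theorem exp_pi_mul_I_add_mul_odd_div {m : ℂ} (hm : m ≠ 0) (x : ℂ) {k : ℤ} (hk : Odd k) :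
    Complex.exp (π * I * (x + m * k) / m) = -Complex.exp (π * I * x / m) := by
  have : π * I * (x + m * k) / m = π * I * x / m + k * (π * I) := by field_simp
  rw [this, Complex.exp_add, exp_int_mul, exp_pi_mul_I, hk.neg_one_zpow, mul_neg_one]

theorem chu_cross_term_reflect {n : ℕ} (hn : n ≠ 0) {u : ℤ} (hu : Odd u) (j : ℤ) :
    chu (2 * n) (n + 1) (2 * n - u - j) *
        (starRingEnd ℂ) (chu (2 * n) (n - 1) (2 * n - u - j + u)) =
      -(chu (2 * n) (n + 1) j * (starRingEnd ℂ) (chu (2 * n) (n - 1) (j + u))) := by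
  have hodd : Odd (u ^ 2 + 2 * (2 * n - u - 2 * j - n * u + u * j)) :=
    hu.pow.add_even (even_two_mul _)
  rw [chu_mul_conj_chu, chu_mul_conj_chu,
    ← exp_pi_mul_I_add_mul_odd_div (by exact_mod_cast (Nat.mul_ne_zero two_ne_zero hn)) _ hodd]
  congr 1
  push_cast
  ring

theorem chu_crosscorrelation_odd_shift_general (n : ℕ) (u : ℤ)
    (hodd : Odd u) (hu : |u| ≤ 2 * (n : ℤ) - 1) :
    ‖corr (2 * n) (chu (2 * n) ((n : ℤ) + 1)) (chu (2 * n) ((n : ℤ) - 1)) u‖ = 1 := by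
  obtain ⟨hu₁, hu₂⟩ := abs_le.mp hu
  have hn : n ≠ 0 := by omega
  set f : ℤ → ℂ := fun j =>
    chu (2 * n) (n + 1) j * (starRingEnd ℂ) (chu (2 * n) (n - 1) (j + u))
  have hlo : max 0 (-u) ≤ (2 * n : ℕ) - 1 - max 0 u := by push_cast; omega
  have hends : max 0 (-u) + 1 + ((2 * n : ℕ) - 1 - max 0 u) = 2 * n - u := by push_cast; omega
  have hpaired : ∑ j ∈ Icc (max 0 (-u) + 1) ((2 * n : ℕ) - 1 - max 0 u), f j = 0 := by
    refine sum_Icc_eq_zero_of_reflect_eq_neg ?_ fun j => ?_ <;> rw [hends]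
    · exact (even_two_mul _).sub_odd hodd
    · exact chu_cross_term_reflect hn hodd j
  rw [corr_eq_sum_Icc, Icc_eq_cons_Ioc hlo, sum_cons, ← Icc_add_one_left_eq_Ioc, hpaired,
    add_zero, norm_mul, RCLike.norm_conj, norm_chu, norm_chu, mul_one]

/-- for odd shifts u with |u| <= 2n - 1, the crosscorrelation of
X_n = Z_(2n)^(n+1) and Y_n = Z_(2n)^(n-1) has modulus 1. -/
theorem chu_crosscorrelation_odd_shift (n : ℕ) (hn : 1 ≤ n) (u : ℤ)
    (hodd : Odd u) (hu : |u| ≤ 2 * (n : ℤ) - 1) :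
    ‖corr (2 * n) (chu (2 * n) ((n : ℤ) + 1)) (chu (2 * n) ((n : ℤ) - 1)) u‖ = 1 :=
  chu_crosscorrelation_odd_shift_general n u hodd hu
end
end
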